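/- arXiv:1604.04266 — 2 statements merged into one kernel-verified Lean document; each statement's English description precedes it below -/
import Mathlib

section
/- Let p > 0 and h > 0, and set s = sinh(ph), c = cosh(ph). With b₂, c₁, d₁ as in the exponential B-spline coefficient definitions, one has p·(c₁·e^{ph} + d₁·e^{−ph}) = b₂·s, i.e. p²·(c₁·e^{ph} + d₁·e^{−ph}) = p²s/(2(phc−s)). (This is the matching of second derivatives of the exponential B-spline across the interior knot x_{i−1}.) -/
lemma sinh_lt_mul_cosh {x : ℝ} (hx : 0 < x) : Real.sinh x < x * Real.cosh x := by
  have h1 : StrictMonoOn (fun y : ℝ => y * Real.cosh y - Real.sinh y) (Set.Ici 0) := by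
    apply strictMonoOn_of_deriv_pos (convex_Ici 0)
    · fun_prop
    · intro y hy
      rw [interior_Ici] at hy
      have hd : HasDerivAt (fun y : ℝ => y * Real.cosh y - Real.sinh y)
          (1 * Real.cosh y + y * Real.sinh y - Real.cosh y) y := by
        exact ((hasDerivAt_id y).mul (Real.hasDerivAt_cosh y)).sub (Real.hasDerivAt_sinh y)
      rw [hd.deriv]
      rw [Set.mem_Ioi] at hy
      have h3 := mul_pos hy (Real.sinh_pos_iff.2 hy)
      linarith
  have h2 := h1 (Set.self_mem_Ici) (Set.mem_Ici.2 hx.le) hx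
  simp at h2
  linarith

/-- Matching of second derivatives of the exponential B-spline across the interior
knot `x_{i−1}`: `p·(c₁·e^{ph} + d₁·e^{−ph}) = b₂·s`, i.e.
`p²·(c₁·e^{ph} + d₁·e^{−ph}) = p²s/(2(phc−s))`. -/
theorem expBspline_second_deriv_match_at_interior_knot
    (p h : ℝ) (hp : 0 < p) (hh : 0 < h)
    (s c b₁ b₂ c₁ d₁ : ℝ)
    (hs : s = Real.sinh (p * h)) (hc : c = Real.cosh (p * h))
    (hb₁ : b₁ = p / 2 * ((c * (c - 1) + s ^ 2) / ((p * h * c - s) * (1 - c))))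
    (hb₂ : b₂ = p / (2 * (p * h * c - s)))
    (hc₁ : c₁ = 1 / 4 * ((Real.exp (-(p * h)) * (1 - c) + s * (Real.exp (-(p * h)) - 1)) /
        ((p * h * c - s) * (1 - c))))
    (hd₁ : d₁ = 1 / 4 * ((Real.exp (p * h) * (c - 1) + s * (Real.exp (p * h) - 1)) /
        ((p * h * c - s) * (1 - c)))) :
    p * (c₁ * Real.exp (p * h) + d₁ * Real.exp (-(p * h))) = b₂ * s ∧
    p ^ 2 * (c₁ * Real.exp (p * h) + d₁ * Real.exp (-(p * h))) =
      p ^ 2 * s / (2 * (p * h * c - s)) := by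
  have hx : 0 < p * h := mul_pos hp hh
  have hc1 : 1 < c := hc ▸ Real.one_lt_cosh.2 (ne_of_gt hx)
  have hD : 0 < p * h * c - s := by
    rw [hs, hc]; linarith [sinh_lt_mul_cosh hx]
  have hD' : p * h * c - s ≠ 0 := ne_of_gt hD
  have hcne : (1 : ℝ) - c ≠ 0 := by linarith
  have hE : Real.exp (p * h) ≠ 0 := Real.exp_ne_zero _
  have hmul : Real.exp (p * h) * Real.exp (-(p * h)) = 1 := by
    rw [← Real.exp_add]; simp
  have hsum : Real.exp (p * h) + Real.exp (-(p * h)) = 2 * c := by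
    rw [hc, Real.cosh_eq]; ring
  have hnum : (Real.exp (-(p * h)) * (1 - c) + s * (Real.exp (-(p * h)) - 1)) * Real.exp (p * h)
      + (Real.exp (p * h) * (c - 1) + s * (Real.exp (p * h) - 1)) * Real.exp (-(p * h))
      = 2 * s * (1 - c) := by
    linear_combination 2 * s * hmul - s * hsum
  have key : c₁ * Real.exp (p * h) + d₁ * Real.exp (-(p * h)) =
      s / (2 * (p * h * c - s)) := by
    calc c₁ * Real.exp (p * h) + d₁ * Real.exp (-(p * h))
        = ((Real.exp (-(p * h)) * (1 - c) + s * (Real.exp (-(p * h)) - 1)) * Real.exp (p * h)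
          + (Real.exp (p * h) * (c - 1) + s * (Real.exp (p * h) - 1)) * Real.exp (-(p * h)))
          / (4 * ((p * h * c - s) * (1 - c))) := by
          rw [hc₁, hd₁]; field_simp
      _ = (2 * s * (1 - c)) / (4 * ((p * h * c - s) * (1 - c))) := by rw [hnum]
      _ = s / (2 * (p * h * c - s)) := by field_simp; ring
  constructor
  · rw [key, hb₂]; field_simp
  · rw [key]; field_simp
end

section
/- Let p > 0, h > 0, N ∈ ℕ, a ∈ ℝ, with knots x_j = a + jh for j = −3,…,N+3, and set s = sinh(ph), c = cosh(ph), α₂ = p(1−c)/(2(phc−s)). For real coefficients δ_{−1}, …, δ_{N+1}, the function U_N(x) = Σ_{i=−1}^{N+1} δ_i φ_i(x) satisfies U_N′(x_m) = α₂δ_{m−1} − α₂δ_{m+1} for every m = 0, …, N. -/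
/-- The exponential B-spline `φ_i` with parameter `p`, mesh size `h` and knots
`x_j = x₀ + j·h`, defined piecewise on `[x_{i−2}, x_{i+2}]` and zero elsewhere. -/
noncomputable def expBspline (p h x₀ : ℝ) (i : ℤ) : ℝ → ℝ := fun x =>
  let s := Real.sinh (p * h)
  let c := Real.cosh (p * h)
  let a₁ := p * h * c / (p * h * c - s)
  let b₁ := p / 2 * ((c * (c - 1) + s ^ 2) / ((p * h * c - s) * (1 - c)))
  let b₂ := p / (2 * (p * h * c - s))
  let c₁ := 1 / 4 * ((Real.exp (-(p * h)) * (1 - c) + s * (Real.exp (-(p * h)) - 1)) /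
      ((p * h * c - s) * (1 - c)))
  let d₁ := 1 / 4 * ((Real.exp (p * h) * (c - 1) + s * (Real.exp (p * h) - 1)) /
      ((p * h * c - s) * (1 - c)))
  let X : ℤ → ℝ := fun j => x₀ + (j : ℝ) * h
  if X (i - 2) ≤ x ∧ x ≤ X (i - 1) then
    b₂ * ((X (i - 2) - x) - Real.sinh (p * (X (i - 2) - x)) / p)
  else if X (i - 1) ≤ x ∧ x ≤ X i then
    a₁ + b₁ * (X i - x) + c₁ * Real.exp (p * (X i - x)) + d₁ * Real.exp (-(p * (X i - x)))
  else if X i ≤ x ∧ x ≤ X (i + 1) then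
    a₁ + b₁ * (x - X i) + c₁ * Real.exp (p * (x - X i)) + d₁ * Real.exp (-(p * (x - X i)))
  else if X (i + 1) ≤ x ∧ x ≤ X (i + 2) then
    b₂ * ((x - X (i + 2)) - Real.sinh (p * (x - X (i + 2))) / p)
  else 0

/-!
Each `φ_i` is the translate `u ↦ Φ (u - x_i)` of one profile `Φ` supported in `[-2h, 2h]`, so
`U_N′(x_m) = ∑ δ_i Φ′((m - i) h)`. At the knots, `Φ′` is computed from the two adjacent pieces:
it vanishes at `0`, `±2h` and beyond, and equals `±α₂` at `±h`. The one-sided values agree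
because of explicit identities between the coefficients `a₁, b₁, b₂, c₁, d₁`, proved by writing
`cosh` and `sinh` through `exp (p h)`.
-/

open Real Set Filter Topology

theorem HasDerivAt.of_nhdsLT_nhdsGT {F : Type*} [NormedAddCommGroup F] [NormedSpace ℝ F]
    {f gl gr : ℝ → F} {f' : F} {x : ℝ} (hl : HasDerivAt gl f' x) (hr : HasDerivAt gr f' x)
    (hfl : f =ᶠ[𝓝[<] x] gl) (hfr : f =ᶠ[𝓝[>] x] gr) (hxl : f x = gl x) (hxr : f x = gr x) :
    HasDerivAt f f' x := by
  have hIic := hasDerivWithinAt_Iio_iff_Iic.1 (hl.hasDerivWithinAt.congr_of_eventuallyEq hfl hxl)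
  have hIci := hasDerivWithinAt_Ioi_iff_Ici.1 (hr.hasDerivWithinAt.congr_of_eventuallyEq hfr hxr)
  simpa [Iic_union_Ici] using hIic.union hIci

namespace ExpBspline

variable (p h : ℝ)

noncomputable def a₁ : ℝ := p * h * cosh (p * h) / (p * h * cosh (p * h) - sinh (p * h))
noncomputable def b₁ : ℝ := p / 2 * ((cosh (p * h) * (cosh (p * h) - 1) + sinh (p * h) ^ 2) /
    ((p * h * cosh (p * h) - sinh (p * h)) * (1 - cosh (p * h))))
noncomputable def b₂ : ℝ := p / (2 * (p * h * cosh (p * h) - sinh (p * h)))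
noncomputable def c₁ : ℝ := 1 / 4 * ((exp (-(p * h)) * (1 - cosh (p * h)) +
    sinh (p * h) * (exp (-(p * h)) - 1)) /
      ((p * h * cosh (p * h) - sinh (p * h)) * (1 - cosh (p * h))))
noncomputable def d₁ : ℝ := 1 / 4 * ((exp (p * h) * (cosh (p * h) - 1) +
    sinh (p * h) * (exp (p * h) - 1)) /
      ((p * h * cosh (p * h) - sinh (p * h)) * (1 - cosh (p * h))))

noncomputable def innerPiece (t : ℝ) : ℝ :=
  a₁ p h + b₁ p h * t + c₁ p h * exp (p * t) + d₁ p h * exp (-(p * t))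

noncomputable def outerPiece (t : ℝ) : ℝ := b₂ p h * (t - sinh (p * t) / p)

noncomputable def profile (u : ℝ) : ℝ :=
  if -(2 * h) ≤ u ∧ u ≤ -h then outerPiece p h (-(2 * h) - u)
  else if -h ≤ u ∧ u ≤ 0 then innerPiece p h (-u)
  else if 0 ≤ u ∧ u ≤ h then innerPiece p h u
  else if h ≤ u ∧ u ≤ 2 * h then outerPiece p h (u - 2 * h)
  else 0

theorem expBspline_eq_profile (x₀ : ℝ) (i : ℤ) (x : ℝ) :
    expBspline p h x₀ i x = profile p h (x - (x₀ + i * h)) := by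
  simp only [expBspline, profile, innerPiece, outerPiece, a₁, b₁, b₂, c₁, d₁]
  push_cast
  refine if_congr ?_ ?_ (if_congr ?_ ?_ (if_congr ?_ ?_ (if_congr ?_ ?_ rfl)))
  all_goals first
    | exact and_congr (by constructor <;> intro <;> linarith)
        (by constructor <;> intro <;> linarith)
    | ring_nf

noncomputable def knotSlope : ℝ :=
  p * (1 - cosh (p * h)) / (2 * (p * h * cosh (p * h) - sinh (p * h)))

theorem b₁_add_mul_c₁_sub_mul_d₁ : b₁ p h + p * c₁ p h - p * d₁ p h = 0 := by
  simp only [b₁, c₁, d₁, cosh_eq, sinh_eq]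
  ring

variable {p h}

theorem b₁_add_mul_c₁_exp_sub_mul_d₁_exp (hph : p * h ≠ 0) :
    b₁ p h + p * c₁ p h * exp (p * h) - p * d₁ p h * exp (-(p * h)) = knotSlope p h := by
  have hc : 1 - cosh (p * h) ≠ 0 := by linarith [one_lt_cosh.2 hph]
  simp only [b₁, c₁, d₁, knotSlope]
  rw [exp_neg]
  field_simp
  congr 1
  rw [cosh_eq, sinh_eq, exp_neg]
  field_simp
  ring

theorem innerPiece_eq_outerPiece (hp : p ≠ 0) (hph : p * h ≠ 0) :
    innerPiece p h h = outerPiece p h (-h) := by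
  have hc : 1 - cosh (p * h) ≠ 0 := by linarith [one_lt_cosh.2 hph]
  simp only [innerPiece, outerPiece, a₁, b₁, b₂, c₁, d₁]
  rw [exp_neg]
  field_simp
  congr 1
  rw [sinh_neg, cosh_eq, sinh_eq, exp_neg]
  field_simp
  ring

variable (p h) in
theorem hasDerivAt_innerPiece (t : ℝ) :
    HasDerivAt (innerPiece p h)
      (b₁ p h + p * c₁ p h * exp (p * t) - p * d₁ p h * exp (-(p * t))) t := by
  have hlin : HasDerivAt (fun t => p * t) p t := by simpa using (hasDerivAt_id t).const_mul p
  exact ((((hasDerivAt_id' t).const_mul (b₁ p h)).const_add (a₁ p h)).fun_add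
    (hlin.exp.const_mul (c₁ p h))).fun_add (hlin.fun_neg.exp.const_mul (d₁ p h)) |>.congr_deriv
    (by ring)

theorem hasDerivAt_outerPiece (hp : p ≠ 0) (t : ℝ) :
    HasDerivAt (outerPiece p h) (b₂ p h * (1 - cosh (p * t))) t := by
  have hlin : HasDerivAt (fun t => p * t) p t := by simpa using (hasDerivAt_id t).const_mul p
  exact (((hasDerivAt_id' t).fun_sub (hlin.sinh.div_const p)).const_mul (b₂ p h)).congr_deriv
    (by field_simp)

variable (h) in
theorem outerPiece_zero : outerPiece p h 0 = 0 := by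
  simp [outerPiece]

variable (p h) in
theorem hasDerivAt_innerPiece_zero : HasDerivAt (innerPiece p h) 0 0 := by
  simpa [b₁_add_mul_c₁_sub_mul_d₁] using hasDerivAt_innerPiece p h 0

theorem hasDerivAt_innerPiece_self (hph : p * h ≠ 0) :
    HasDerivAt (innerPiece p h) (knotSlope p h) h := by
  simpa [b₁_add_mul_c₁_exp_sub_mul_d₁_exp hph] using hasDerivAt_innerPiece p h h

theorem hasDerivAt_outerPiece_zero (hp : p ≠ 0) : HasDerivAt (outerPiece p h) 0 0 := by
  simpa using hasDerivAt_outerPiece (h := h) hp 0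

theorem hasDerivAt_outerPiece_neg (hp : p ≠ 0) :
    HasDerivAt (outerPiece p h) (knotSlope p h) (-h) := by
  convert hasDerivAt_outerPiece hp (-h) using 1
  rw [knotSlope, b₂, mul_neg, cosh_neg]
  ring

theorem profile_of_lt_neg_two_mul (hh : 0 < h) {u : ℝ} (hu : u < -(2 * h)) :
    profile p h u = 0 := by
  unfold profile; grind

theorem profile_of_two_mul_lt (hh : 0 < h) {u : ℝ} (hu : 2 * h < u) : profile p h u = 0 := by
  unfold profile; grind

theorem profile_of_neg_two_mul_le_of_le_neg {u : ℝ} (hu₁ : -(2 * h) ≤ u) (hu₂ : u ≤ -h) :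
    profile p h u = outerPiece p h (-(2 * h) - u) := by
  unfold profile; grind

theorem profile_of_neg_lt_of_nonpos {u : ℝ} (hu₁ : -h < u) (hu₂ : u ≤ 0) :
    profile p h u = innerPiece p h (-u) := by
  unfold profile; grind

theorem profile_of_pos_of_le (hh : 0 < h) {u : ℝ} (hu₁ : 0 < u) (hu₂ : u ≤ h) :
    profile p h u = innerPiece p h u := by
  unfold profile; grind

theorem profile_of_lt_of_le_two_mul (hh : 0 < h) {u : ℝ} (hu₁ : h < u) (hu₂ : u ≤ 2 * h) :
    profile p h u = outerPiece p h (u - 2 * h) := by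
  unfold profile; grind

theorem hasDerivAt_profile_neg_two_mul (hp : p ≠ 0) (hh : 0 < h) :
    HasDerivAt (profile p h) 0 (-(2 * h)) := by
  refine HasDerivAt.of_nhdsLT_nhdsGT (gl := fun _ => 0)
    (gr := fun u => outerPiece p h (-(2 * h) - u)) (hasDerivAt_const _ _) ?_ ?_ ?_ ?_ ?_
  · simpa [Function.comp_def] using (hasDerivAt_outerPiece_zero (h := h) hp).comp_of_eq _
      ((hasDerivAt_id' (-(2 * h))).const_sub (-(2 * h))) (by ring)
  · filter_upwards [self_mem_nhdsWithin] with u hu using profile_of_lt_neg_two_mul hh hu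
  · filter_upwards [Ioo_mem_nhdsGT (by linarith : -(2 * h) < -h)] with u hu
      using profile_of_neg_two_mul_le_of_le_neg hu.1.le hu.2.le
  · exact (profile_of_neg_two_mul_le_of_le_neg le_rfl (by linarith)).trans
      (by simp [outerPiece_zero])
  · exact profile_of_neg_two_mul_le_of_le_neg le_rfl (by linarith)

theorem hasDerivAt_profile_neg (hp : p ≠ 0) (hh : 0 < h) :
    HasDerivAt (profile p h) (-knotSlope p h) (-h) := by
  refine HasDerivAt.of_nhdsLT_nhdsGT (gl := fun u => outerPiece p h (-(2 * h) - u))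
    (gr := fun u => innerPiece p h (-u)) ?_ ?_ ?_ ?_ ?_ ?_
  · simpa [Function.comp_def] using (hasDerivAt_outerPiece_neg (h := h) hp).comp_of_eq _
      ((hasDerivAt_id' (-h)).const_sub (-(2 * h))) (by ring)
  · simpa [Function.comp_def] using
      (hasDerivAt_innerPiece_self (mul_ne_zero hp hh.ne')).comp_of_eq _ (hasDerivAt_neg' (-h))
        (by ring)
  · filter_upwards [Ioo_mem_nhdsLT (by linarith : -(2 * h) < -h)] with u hu
      using profile_of_neg_two_mul_le_of_le_neg hu.1.le hu.2.le
  · filter_upwards [Ioo_mem_nhdsGT (by linarith : -h < 0)] with u hu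
      using profile_of_neg_lt_of_nonpos hu.1 hu.2.le
  · exact profile_of_neg_two_mul_le_of_le_neg (by linarith) le_rfl
  · rw [profile_of_neg_two_mul_le_of_le_neg (by linarith) le_rfl, neg_neg,
      innerPiece_eq_outerPiece hp (mul_ne_zero hp hh.ne')]
    ring_nf

theorem hasDerivAt_profile_zero (hh : 0 < h) : HasDerivAt (profile p h) 0 0 := by
  refine HasDerivAt.of_nhdsLT_nhdsGT (gl := fun u => innerPiece p h (-u)) (gr := innerPiece p h)
    ?_ (hasDerivAt_innerPiece_zero p h) ?_ ?_ ?_ ?_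
  · simpa [Function.comp_def] using (hasDerivAt_innerPiece_zero p h).comp_of_eq _
      (hasDerivAt_neg' 0) (by ring)
  · filter_upwards [Ioo_mem_nhdsLT (by linarith : -h < 0)] with u hu
      using profile_of_neg_lt_of_nonpos hu.1 hu.2.le
  · filter_upwards [Ioo_mem_nhdsGT hh] with u hu using profile_of_pos_of_le hh hu.1 hu.2.le
  · exact profile_of_neg_lt_of_nonpos (by linarith) le_rfl
  · simpa using profile_of_neg_lt_of_nonpos (p := p) (by linarith) le_rfl

theorem hasDerivAt_profile_self (hp : p ≠ 0) (hh : 0 < h) :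
    HasDerivAt (profile p h) (knotSlope p h) h := by
  refine HasDerivAt.of_nhdsLT_nhdsGT (gr := fun u => outerPiece p h (u - 2 * h))
    (hasDerivAt_innerPiece_self (mul_ne_zero hp hh.ne')) ?_ ?_ ?_ ?_ ?_
  · simpa [Function.comp_def] using (hasDerivAt_outerPiece_neg (h := h) hp).comp_of_eq _
      ((hasDerivAt_id' h).sub_const (2 * h)) (by ring)
  · filter_upwards [Ioo_mem_nhdsLT hh] with u hu using profile_of_pos_of_le hh hu.1 hu.2.le
  · filter_upwards [Ioo_mem_nhdsGT (by linarith : h < 2 * h)] with u hu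
      using profile_of_lt_of_le_two_mul hh hu.1 hu.2.le
  · exact profile_of_pos_of_le hh hh le_rfl
  · rw [profile_of_pos_of_le hh hh le_rfl, innerPiece_eq_outerPiece hp (mul_ne_zero hp hh.ne')]
    ring_nf

theorem hasDerivAt_profile_two_mul (hp : p ≠ 0) (hh : 0 < h) :
    HasDerivAt (profile p h) 0 (2 * h) := by
  refine HasDerivAt.of_nhdsLT_nhdsGT (gl := fun u => outerPiece p h (u - 2 * h)) (gr := fun _ => 0)
    ?_ (hasDerivAt_const _ _) ?_ ?_ ?_ ?_
  · simpa [Function.comp_def] using (hasDerivAt_outerPiece_zero (h := h) hp).comp_of_eq _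
      ((hasDerivAt_id' (2 * h)).sub_const (2 * h)) (by ring)
  · filter_upwards [Ioo_mem_nhdsLT (by linarith : h < 2 * h)] with u hu
      using profile_of_lt_of_le_two_mul hh hu.1 hu.2.le
  · filter_upwards [self_mem_nhdsWithin] with u hu using profile_of_two_mul_lt hh hu
  · exact profile_of_lt_of_le_two_mul hh (by linarith) le_rfl
  · exact (profile_of_lt_of_le_two_mul hh (by linarith) le_rfl).trans (by simp [outerPiece_zero])

theorem profile_eventuallyEq_zero (hh : 0 < h) {u : ℝ} (hu : u < -(2 * h) ∨ 2 * h < u) :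
    profile p h =ᶠ[𝓝 u] 0 := by
  rcases hu with hu | hu
  · filter_upwards [Iio_mem_nhds hu] with v hv using profile_of_lt_neg_two_mul hh hv
  · filter_upwards [Ioi_mem_nhds hu] with v hv using profile_of_two_mul_lt hh hv

theorem hasDerivAt_profile_intCast_mul (hp : p ≠ 0) (hh : 0 < h) (k : ℤ) :
    HasDerivAt (profile p h)
      (if k = 1 then knotSlope p h else if k = -1 then -knotSlope p h else 0) (k * h) := by
  obtain hk | rfl | rfl | rfl | rfl | rfl | hk :
      k ≤ -3 ∨ k = -2 ∨ k = -1 ∨ k = 0 ∨ k = 1 ∨ k = 2 ∨ 3 ≤ k := by omega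
  · have hk' : (k : ℝ) ≤ -3 := by exact_mod_cast hk
    rw [if_neg (by omega), if_neg (by omega)]
    exact (hasDerivAt_const _ _).congr_of_eventuallyEq
      (profile_eventuallyEq_zero hh (Or.inl (by nlinarith)))
  · simpa using hasDerivAt_profile_neg_two_mul hp hh
  · simpa using hasDerivAt_profile_neg hp hh
  · simpa using hasDerivAt_profile_zero (p := p) hh
  · simpa using hasDerivAt_profile_self hp hh
  · simpa using hasDerivAt_profile_two_mul hp hh
  · have hk' : (3 : ℝ) ≤ k := by exact_mod_cast hk
    rw [if_neg (by omega), if_neg (by omega)]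
    exact (hasDerivAt_const _ _).congr_of_eventuallyEq
      (profile_eventuallyEq_zero hh (Or.inr (by nlinarith)))

theorem hasDerivAt_expBspline_knot (hp : p ≠ 0) (hh : 0 < h) (x₀ : ℝ) (i m : ℤ) :
    HasDerivAt (expBspline p h x₀ i)
      (if m - i = 1 then knotSlope p h else if m - i = -1 then -knotSlope p h else 0)
      (x₀ + m * h) := by
  rw [funext (expBspline_eq_profile p h x₀ i)]
  refine HasDerivAt.comp_sub_const _ _ ?_
  rw [show x₀ + m * h - (x₀ + i * h) = ((m - i : ℤ) : ℝ) * h by push_cast; ring]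
  exact hasDerivAt_profile_intCast_mul hp hh (m - i)

end ExpBspline

open ExpBspline in
/-- With `α₂ = p(1−c)/(2(phc−s))`, the spline approximation
`U_N(x) = Σ_{i=−1}^{N+1} δ_i φ_i(x)` satisfies
`U_N′(x_m) = α₂δ_{m−1} − α₂δ_{m+1}` at every knot `x_m`, `0 ≤ m ≤ N`. -/
theorem expBspline_sum_deriv_at_knots (p h : ℝ) (hp : 0 < p) (hh : 0 < h)
    (N : ℕ) (a : ℝ) (δ : ℤ → ℝ)
    (s c α₂ : ℝ) (hs : s = Real.sinh (p * h)) (hc : c = Real.cosh (p * h))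
    (hα₂ : α₂ = p * (1 - c) / (2 * (p * h * c - s))) :
    ∀ m : ℤ, 0 ≤ m → m ≤ (N : ℤ) →
      deriv (fun x => ∑ i ∈ Finset.Icc (-1 : ℤ) ((N : ℤ) + 1), δ i * expBspline p h a i x)
          (a + (m : ℝ) * h)
        = α₂ * δ (m - 1) - α₂ * δ (m + 1) := by
  intro m hm₀ hmN
  have hsum := HasDerivAt.fun_sum (u := Finset.Icc (-1 : ℤ) ((N : ℤ) + 1))
    fun i _ => (hasDerivAt_expBspline_knot hp.ne' hh a i m).const_mul (δ i)
  rw [hsum.deriv, Finset.sum_eq_add (m - 1) (m + 1) (by omega)]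
  · rw [if_pos (by ring), if_neg (by omega), if_pos (by ring), hα₂, hc, hs, knotSlope]
    ring
  · intro i _ hi
    rw [if_neg (by omega), if_neg (by omega), mul_zero]
  all_goals exact fun hm => absurd (Finset.mem_Icc.2 ⟨by omega, by omega⟩) hm
end
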